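/- Let α > 0, let γ satisfy 0 < γ < min(1, α), and let f : {p^k : k ∈ ℤ} × ℝ → ℝ satisfy |f(p^ℓ, x)| ≤ M for all ℓ ∈ ℤ, x ∈ ℝ, and |f(p^ℓ, x)| ≤ A p^{−βℓ} for all ℓ ≥ 1 and x ∈ ℝ, where β + γ > α. Let u be a radial function defined on all of ℚ_p which is bounded on some ball {t : |t|_p ≤ p^N} and satisfies u(|t|_p) = u_0 + (I^α [ f̃(|·|_p, u(|·|_p)) ])(|t|_p) for every nonzero t ∈ ℚ_p. Then for every m ∈ ℤ both Σ_{k=−∞}^{m} p^k |u(p^k)| < ∞ and Σ_{ℓ=m}^{∞} p^{−αℓ} |u(p^ℓ)| < ∞; i.e. u satisfies the summability conditions under which the Vladimirov derivative D^α u of a radial function is defined. -/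

import Mathlib

open MeasureTheory Metric

noncomputable section

variable (p : ℕ) [Fact p.Prime]

instance : MeasurableSpace ℚ_[p] := borel _
instance : BorelSpace ℚ_[p] := ⟨rfl⟩

/-- The closed unit ball of `ℚ_[p]` as a positive compact set. -/
def unitBallPC : TopologicalSpace.PositiveCompacts ℚ_[p] where
  carrier := closedBall 0 1
  isCompact' := isCompact_closedBall 0 1
  interior_nonempty' := ⟨0, mem_interior_iff_mem_nhds.2
    (Filter.mem_of_superset (ball_mem_nhds 0 one_pos) ball_subset_closedBall)⟩

/-- The Haar measure on `ℚ_[p]` normalized so the unit ball has measure 1. -/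
def padicHaar : Measure ℚ_[p] := Measure.addHaarMeasure (unitBallPC p)

/-- A point on the sphere of radius `p^k`. -/
def sph (k : ℤ) : ℚ_[p] := (p : ℚ_[p]) ^ (-k)

/-- A function is radial if it depends only on the p-adic absolute value. -/
def Radial (u : ℚ_[p] → ℝ) : Prop := ∀ x y : ℚ_[p], ‖x‖ = ‖y‖ → u x = u y

/-- The integrand of the Vladimirov operator `D^α` at `x`. -/
def Dker (α : ℝ) (u : ℚ_[p] → ℝ) (x : ℚ_[p]) : ℚ_[p] → ℝ :=
  fun y => ‖y‖ ^ (-α - 1) * (u (x - y) - u x)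

/-- The Vladimirov fractional differentiation operator. -/
def Dop (α : ℝ) (u : ℚ_[p] → ℝ) (x : ℚ_[p]) : ℝ :=
  ((1 - (p : ℝ) ^ α) / (1 - (p : ℝ) ^ (-α - 1))) * ∫ y, Dker p α u x y ∂(padicHaar p)

/-- The kernel of the fractional integral `I^α`. -/
def Iker (α : ℝ) (x y : ℚ_[p]) : ℝ :=
  if α = 1 then Real.log ‖x - y‖ - Real.log ‖y‖
  else ‖x - y‖ ^ (α - 1) - ‖y‖ ^ (α - 1)

/-- The constant in front of the fractional integral. -/
def Icoef (α : ℝ) : ℝ :=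
  if α = 1 then (1 - (p : ℝ)) / (p * Real.log p)
  else (1 - (p : ℝ) ^ (-α)) / (1 - (p : ℝ) ^ (α - 1))

/-- The p-adic fractional integral `I^α`. -/
def Iop (α : ℝ) (u : ℚ_[p] → ℝ) (x : ℚ_[p]) : ℝ :=
  Icoef p α * ∫ y in {y : ℚ_[p] | ‖y‖ ≤ ‖x‖}, Iker p α x y * u y ∂(padicHaar p)

end
open scoped ENNReal NNReal

section AuxMeasure

variable (p : ℕ) [Fact p.Prime]

instance : (padicHaar p).IsAddHaarMeasure :=
  Measure.isAddHaarMeasure_addHaarMeasure _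

lemma hp1 : (1:ℝ) < (p:ℝ) := by exact_mod_cast (Fact.out : p.Prime).one_lt
lemma hp0 : (0:ℝ) < (p:ℝ) := lt_trans one_pos (hp1 p)

/-- The closed ball of radius `p^n`. -/
def Bset (n : ℤ) : Set ℚ_[p] := {y : ℚ_[p] | ‖y‖ ≤ (p:ℝ)^n}

lemma Bset_meas (n : ℤ) : MeasurableSet (Bset p n) :=
  (isClosed_le continuous_norm continuous_const).measurableSet

lemma measure_translate_ball (c : ℚ_[p]) (r : ℝ) :
    padicHaar p {y : ℚ_[p] | ‖y - c‖ ≤ r} = padicHaar p {y : ℚ_[p] | ‖y‖ ≤ r} := by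
  have h : {y : ℚ_[p] | ‖y - c‖ ≤ r} = (fun h => (-c) + h) ⁻¹' {y : ℚ_[p] | ‖y‖ ≤ r} := by
    ext y; simp [Set.mem_preimage, sub_eq_add_neg, add_comm]
  rw [h, measure_preimage_add]

lemma measure_Bset_succ (n : ℤ) :
    padicHaar p (Bset p (n+1)) = p * padicHaar p (Bset p n) := by
  classical
  set c : ℚ_[p] := (p:ℚ_[p])^(-(n+1)) with hc_def
  have hcnorm : ‖c‖ = (p:ℝ)^(n+1) := by
    rw [hc_def, Padic.norm_p_zpow, neg_neg]
  have hnormint : ∀ j : ℕ, j < p → ∀ i : ℕ, i < p → j ≠ i →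
      ‖((j:ℚ_[p]) - (i:ℚ_[p]))‖ = 1 := by
    intro j hj i hi hne
    have hcast : ((j:ℚ_[p]) - (i:ℚ_[p])) = (((j:ℤ) - (i:ℤ) : ℤ) : ℚ_[p]) := by push_cast; ring
    rw [hcast]
    have h1 : ‖(((j:ℤ) - (i:ℤ) : ℤ) : ℚ_[p])‖ ≤ 1 := Padic.norm_int_le_one _
    have h2 : ¬ ((p:ℤ) ∣ ((j:ℤ) - (i:ℤ))) := by
      intro hdvd
      have hne' : ((j:ℤ) - (i:ℤ)) ≠ 0 := by
        simpa [sub_eq_zero] using fun h => hne (by exact_mod_cast h)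
      have := Int.le_of_dvd (by positivity) ((dvd_abs _ _).mpr hdvd)
      have hlt : |((j:ℤ) - (i:ℤ))| < p := by
        rw [abs_sub_lt_iff]; omega
      omega
    have h3 : ¬ (‖(((j:ℤ) - (i:ℤ) : ℤ) : ℚ_[p])‖ < 1) := by
      rw [Padic.norm_intCast_lt_one_iff]; exact h2
    linarith [lt_or_eq_of_le h1]
  -- the cover
  have cover : Bset p (n+1) = ⋃ j ∈ Finset.range p, {y : ℚ_[p] | ‖y - (j:ℚ_[p]) * c‖ ≤ (p:ℝ)^n} := by
    ext y
    simp only [Set.mem_iUnion, Finset.mem_range, Set.mem_setOf_eq, Bset]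
    constructor
    · intro hy
      have hz : ‖y * (p:ℚ_[p])^(n+1)‖ ≤ 1 := by
        rw [norm_mul, Padic.norm_p_zpow]
        calc ‖y‖ * (p:ℝ)^(-(n+1)) ≤ (p:ℝ)^(n+1) * (p:ℝ)^(-(n+1)) := by
              apply mul_le_mul_of_nonneg_right hy (zpow_nonneg (le_of_lt (hp0 p)) _)
          _ = 1 := by
              rw [← zpow_add₀ (ne_of_gt (hp0 p)), show (n+1) + (-(n+1)) = 0 from by ring, zpow_zero]
      set z : ℤ_[p] := ⟨y * (p:ℚ_[p])^(n+1), hz⟩ with hz_def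
      refine ⟨z.appr 1, by simpa using z.appr_lt 1, ?_⟩
      have hspec : z - (z.appr 1 : ℤ_[p]) ∈ Ideal.span {(p:ℤ_[p])^1} := by
        simpa using z.appr_spec 1
      have hnorm : ‖z - (z.appr 1 : ℤ_[p])‖ ≤ (p:ℝ)^(-(1:ℤ)) := by
        have := (PadicInt.norm_le_pow_iff_mem_span_pow (z - (z.appr 1 : ℤ_[p])) 1).2 hspec
        simpa using this
      have hnormQ : ‖(y * (p:ℚ_[p])^(n+1) - (z.appr 1 : ℚ_[p]))‖ ≤ (p:ℝ)^(-(1:ℤ)) := by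
        have : ((z - (z.appr 1 : ℤ_[p]) : ℤ_[p]) : ℚ_[p]) = y * (p:ℚ_[p])^(n+1) - (z.appr 1 : ℚ_[p]) := by
          rw [PadicInt.coe_sub, PadicInt.coe_natCast]
        rw [← this]; exact hnorm
      have hpq0 : (p:ℚ_[p]) ≠ 0 := by
        exact_mod_cast (Nat.Prime.ne_zero (Fact.out : p.Prime))
      have hmul : (p:ℚ_[p])^(n+1) * (p:ℚ_[p])^(-(n+1)) = 1 := by
        rw [← zpow_add₀ hpq0, show (n+1) + (-(n+1)) = 0 from by ring, zpow_zero]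
      have key : y - (z.appr 1 : ℚ_[p]) * c = (y * (p:ℚ_[p])^(n+1) - (z.appr 1 : ℚ_[p])) * c := by
        rw [hc_def, sub_mul, mul_assoc, hmul, mul_one]
      rw [key, norm_mul, hcnorm]
      calc ‖y * (p:ℚ_[p])^(n+1) - ((z.appr 1 : ℕ) : ℚ_[p])‖ * (p:ℝ)^(n+1)
          ≤ (p:ℝ)^(-(1:ℤ)) * (p:ℝ)^(n+1) := by
            apply mul_le_mul_of_nonneg_right hnormQ (zpow_nonneg (le_of_lt (hp0 p)) _)
        _ = (p:ℝ)^n := by rw [← zpow_add₀ (ne_of_gt (hp0 p))]; ring_nf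
    · rintro ⟨j, hj, hy⟩
      have h1 : ‖(j:ℚ_[p]) * c‖ ≤ (p:ℝ)^(n+1) := by
        rw [norm_mul, hcnorm]
        have : ‖(j:ℚ_[p])‖ ≤ 1 := by
          have := Padic.norm_int_le_one (p := p) (j:ℤ)
          simpa using this
        nlinarith [zpow_pos (hp0 p) (n+1)]
      have : y = (y - (j:ℚ_[p]) * c) + (j:ℚ_[p]) * c := by ring
      rw [this]
      refine le_trans (Padic.nonarchimedean _ _) ?_
      apply max_le
      · exact le_trans hy (zpow_le_zpow_right₀ (le_of_lt (hp1 p)) (by omega))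
      · exact h1
  have hdisj : (↑(Finset.range p) : Set ℕ).PairwiseDisjoint
      (fun j => {y : ℚ_[p] | ‖y - (j:ℚ_[p]) * c‖ ≤ (p:ℝ)^n}) := by
    intro i hi j hj hne
    simp only [Finset.coe_range, Set.mem_Iio] at hi hj
    rw [Function.onFun, Set.disjoint_left]
    intro y hyi hyj
    simp only [Set.mem_setOf_eq] at hyi hyj
    have hdiff : ‖(i:ℚ_[p]) * c - (j:ℚ_[p]) * c‖ = (p:ℝ)^(n+1) := by
      rw [← sub_mul, norm_mul, hnormint i hi j hj hne, hcnorm, one_mul]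
    have : (i:ℚ_[p]) * c - (j:ℚ_[p]) * c = (y - (j:ℚ_[p])*c) - (y - (i:ℚ_[p])*c) := by ring
    rw [this] at hdiff
    have hle : ‖(y - (j:ℚ_[p])*c) - (y - (i:ℚ_[p])*c)‖ ≤ (p:ℝ)^n := by
      have := Padic.nonarchimedean (y - (j:ℚ_[p])*c) (-(y - (i:ℚ_[p])*c))
      simp only [norm_neg] at this
      refine le_trans (by simpa [sub_eq_add_neg] using this) (max_le hyj hyi)
    rw [hdiff] at hle
    have := zpow_lt_zpow_right₀ (hp1 p) (show n < n+1 by omega)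
    linarith
  have hmeas : ∀ b ∈ Finset.range p, MeasurableSet {y : ℚ_[p] | ‖y - (b:ℚ_[p]) * c‖ ≤ (p:ℝ)^n} := by
    intro b _
    exact (isClosed_le (continuous_norm.comp (continuous_id.sub continuous_const)) continuous_const).measurableSet
  rw [cover, measure_biUnion_finset hdisj hmeas]
  have : ∀ j ∈ Finset.range p, padicHaar p {y : ℚ_[p] | ‖y - (j:ℚ_[p]) * c‖ ≤ (p:ℝ)^n}
      = padicHaar p (Bset p n) := fun j _ => measure_translate_ball p _ _
  rw [Finset.sum_congr rfl this, Finset.sum_const, Finset.card_range, nsmul_eq_mul]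

lemma measure_Bset_zero : padicHaar p (Bset p 0) = 1 := by
  have h : Bset p 0 = closedBall (0:ℚ_[p]) 1 := by
    ext y; simp [Bset, mem_closedBall, dist_eq_norm]
  rw [h]
  exact Measure.addHaarMeasure_self (K₀ := unitBallPC p)

lemma measure_Bset (n : ℤ) : padicHaar p (Bset p n) = (p:ℝ≥0∞)^n := by
  have hpe0 : (p:ℝ≥0∞) ≠ 0 := by
    exact_mod_cast (Nat.Prime.ne_zero (Fact.out : p.Prime))
  have hpet : (p:ℝ≥0∞) ≠ ⊤ := ENNReal.natCast_ne_top p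
  induction n using Int.induction_on with
  | zero => simpa using measure_Bset_zero p
  | succ k ih =>
      rw [measure_Bset_succ p k, ih, ENNReal.zpow_add hpe0 hpet, zpow_one, mul_comm]
  | pred k ih =>
      have h := measure_Bset_succ p (-(k:ℤ)-1)
      rw [show (-(k:ℤ)-1)+1 = -(k:ℤ) by ring, ih] at h
      have : padicHaar p (Bset p (-(k:ℤ)-1)) = (p:ℝ≥0∞)⁻¹ * (p:ℝ≥0∞)^(-(k:ℤ)) := by
        rw [h, ← mul_assoc, ENNReal.inv_mul_cancel hpe0 hpet, one_mul]
      rw [show (-(k:ℤ)-1 : ℤ) = -(k:ℤ) + (-1) by ring] at this ⊢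
      rw [this, ENNReal.zpow_add hpe0 hpet, mul_comm]
      congr 1
      exact (zpow_neg_one _).symm

end AuxMeasure
section AuxSphere

variable (p : ℕ) [Fact p.Prime]

/-- The sphere of radius `p^k`. -/
def Sset (k : ℤ) : Set ℚ_[p] := {y : ℚ_[p] | ‖y‖ = (p:ℝ)^k}

lemma Sset_meas (k : ℤ) : MeasurableSet (Sset p k) :=
  (isClosed_eq continuous_norm continuous_const).measurableSet

lemma Sset_subset (k : ℤ) : Sset p k ⊆ Bset p k := fun y hy => le_of_eq hy

lemma measure_Sset_le (k : ℤ) : padicHaar p (Sset p k) ≤ (p:ℝ≥0∞)^k := by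
  rw [← measure_Bset p k]
  exact measure_mono (Sset_subset p k)

lemma ennreal_pow_eq_ofReal (k : ℤ) : (p:ℝ≥0∞)^k = ENNReal.ofReal ((p:ℝ)^k) := by
  have h0 : ((p:ℝ≥0)) ≠ 0 := by
    exact_mod_cast (Nat.Prime.ne_zero (Fact.out : p.Prime))
  have h1 : ((p:ℝ)^k) = (((p:ℝ≥0)^k : ℝ≥0) : ℝ) := by
    push_cast; rfl
  rw [h1, ENNReal.ofReal_coe_nnreal, ENNReal.coe_zpow h0]
  congr 1

lemma Bset_decomp (n : ℤ) :
    Bset p n = {(0:ℚ_[p])} ∪ ⋃ (j : ℕ), Sset p (n - j) := by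
  ext y
  simp only [Set.mem_union, Set.mem_singleton_iff, Set.mem_iUnion, Bset, Sset, Set.mem_setOf_eq]
  constructor
  · intro hy
    rcases eq_or_ne y 0 with h0 | h0
    · exact Or.inl h0
    · right
      have hv : ‖y‖ = (p:ℝ)^(-y.valuation) := Padic.norm_eq_zpow_neg_valuation h0
      have hle : -y.valuation ≤ n := by
        by_contra hlt
        push_neg at hlt
        have := zpow_lt_zpow_right₀ (hp1 p) hlt
        rw [← hv] at this
        linarith
      refine ⟨(n + y.valuation).toNat, ?_⟩
      rw [hv]
      congr 1
      omega
  · rintro (h0 | ⟨j, hj⟩)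
    · rw [h0]; simp [zpow_nonneg (le_of_lt (hp0 p))]
    · rw [hj]
      exact zpow_le_zpow_right₀ (le_of_lt (hp1 p)) (by omega)

lemma lint_Bset_eq_tsum (n : ℤ) (g : ℚ_[p] → ℝ≥0∞) :
    ∫⁻ y in Bset p n, g y ∂(padicHaar p)
      = ∑' (j : ℕ), ∫⁻ y in Sset p (n - j), g y ∂(padicHaar p) := by
  rw [Bset_decomp p n, lintegral_union (MeasurableSet.iUnion (fun j => Sset_meas p _)) ?disj,
    lintegral_singleton, measure_singleton, mul_zero, zero_add,
    lintegral_iUnion (fun j => Sset_meas p _) ?pd]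
  case disj =>
    rw [Set.disjoint_left]
    rintro y rfl
    simp only [Set.mem_iUnion, Sset, Set.mem_setOf_eq, norm_zero]
    rintro ⟨j, hj⟩
    have := zpow_pos (hp0 p) (n - (j:ℤ))
    linarith
  case pd =>
    intro i j hij
    rw [Function.onFun, Set.disjoint_left]
    intro y hyi hyj
    simp only [Sset, Set.mem_setOf_eq] at hyi hyj
    rw [hyi] at hyj
    have := zpow_right_injective₀ (hp0 p) (ne_of_gt (hp1 p)) hyj
    omega

/-- Main integral estimate : `∫_{‖y‖ ≤ pⁿ} ‖y‖^s ≤ p^(n(s+1)) / (1 - p^(-(s+1)))`. -/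
lemma Jb (s : ℝ) (hs : -1 < s) (n : ℤ) :
    ∫⁻ y in Bset p n, ENNReal.ofReal (‖y‖ ^ s) ∂(padicHaar p)
      ≤ ENNReal.ofReal ((p:ℝ) ^ ((n:ℝ) * (s+1)) * (1 - (p:ℝ) ^ (-(s+1)))⁻¹) := by
  set r : ℝ := (p:ℝ) ^ (-(s+1)) with hr_def
  have hppos := hp0 p
  have hr0 : 0 ≤ r := le_of_lt (Real.rpow_pos_of_pos hppos _)
  have hr1 : r < 1 := by
    apply Real.rpow_lt_one_of_one_lt_of_neg (hp1 p)
    linarith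
  have sphere_bound : ∀ j : ℕ,
      ∫⁻ y in Sset p (n - j), ENNReal.ofReal (‖y‖ ^ s) ∂(padicHaar p)
        ≤ ENNReal.ofReal ((p:ℝ) ^ ((n:ℝ) * (s+1))) * (ENNReal.ofReal r)^j := by
    intro j
    have hk : ∀ y ∈ Sset p (n - j), ENNReal.ofReal (‖y‖ ^ s)
        ≤ ENNReal.ofReal (((p:ℝ)^((n:ℤ) - (j:ℤ)))^s) := by
      intro y hy
      rw [Sset, Set.mem_setOf_eq] at hy
      rw [hy]
    calc ∫⁻ y in Sset p (n - j), ENNReal.ofReal (‖y‖ ^ s) ∂(padicHaar p)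
        ≤ ∫⁻ _ in Sset p (n - j), ENNReal.ofReal (((p:ℝ)^((n:ℤ) - (j:ℤ)))^s) ∂(padicHaar p) :=
          setLIntegral_mono' (Sset_meas p _) hk
      _ = ENNReal.ofReal (((p:ℝ)^((n:ℤ) - (j:ℤ)))^s) * padicHaar p (Sset p (n - j)) := by
          rw [setLIntegral_const]
      _ ≤ ENNReal.ofReal (((p:ℝ)^((n:ℤ) - (j:ℤ)))^s) * (p:ℝ≥0∞)^((n:ℤ) - (j:ℤ)) :=
          mul_le_mul_right (measure_Sset_le p _) _
      _ = ENNReal.ofReal (((p:ℝ)^((n:ℤ) - (j:ℤ)))^s * (p:ℝ)^((n:ℤ) - (j:ℤ))) := by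
          rw [ennreal_pow_eq_ofReal, ENNReal.ofReal_mul (Real.rpow_nonneg (zpow_nonneg (le_of_lt hppos) _) _)]
      _ = ENNReal.ofReal ((p:ℝ) ^ ((n:ℝ) * (s+1))) * (ENNReal.ofReal r)^j := by
          rw [← ENNReal.ofReal_pow hr0, ← ENNReal.ofReal_mul (Real.rpow_nonneg (le_of_lt hppos) _)]
          congr 1
          have hpk : ((p:ℝ)^((n:ℤ) - (j:ℤ))) = (p:ℝ) ^ (((n:ℝ) - (j:ℝ))) := by
            rw [← Real.rpow_intCast]
            congr 1
            push_cast; ring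
          rw [hpk, ← Real.rpow_natCast r j, hr_def, ← Real.rpow_mul (le_of_lt hppos),
            ← Real.rpow_mul (le_of_lt hppos), ← Real.rpow_add hppos, ← Real.rpow_add hppos]
          congr 1; ring
  calc ∫⁻ y in Bset p n, ENNReal.ofReal (‖y‖ ^ s) ∂(padicHaar p)
      = ∑' (j : ℕ), ∫⁻ y in Sset p (n - j), ENNReal.ofReal (‖y‖ ^ s) ∂(padicHaar p) :=
        lint_Bset_eq_tsum p n _
    _ ≤ ∑' (j : ℕ), ENNReal.ofReal ((p:ℝ) ^ ((n:ℝ) * (s+1))) * (ENNReal.ofReal r)^j :=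
        ENNReal.tsum_le_tsum sphere_bound
    _ = ENNReal.ofReal ((p:ℝ) ^ ((n:ℝ) * (s+1))) * (1 - ENNReal.ofReal r)⁻¹ := by
        rw [ENNReal.tsum_mul_left, ENNReal.tsum_geometric]
    _ = ENNReal.ofReal ((p:ℝ) ^ ((n:ℝ) * (s+1)) * (1 - r)⁻¹) := by
        rw [ENNReal.ofReal_mul (Real.rpow_nonneg (le_of_lt hppos) _)]
        congr 1
        rw [ENNReal.ofReal_inv_of_pos (by linarith : (0:ℝ) < 1 - r),
          ENNReal.ofReal_sub 1 hr0, ENNReal.ofReal_one]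

end AuxSphere
section AuxTranslate

variable (p : ℕ) [Fact p.Prime]

lemma nonarch_sub (a b : ℚ_[p]) : ‖a - b‖ ≤ max ‖a‖ ‖b‖ := by
  have := Padic.nonarchimedean a (-b)
  simpa [sub_eq_add_neg] using this

lemma lint_sub_eq (n : ℤ) (t : ℚ_[p]) (ht : ‖t‖ ≤ (p:ℝ)^n) (g : ℚ_[p] → ℝ≥0∞) :
    ∫⁻ y in Bset p n, g (t - y) ∂(padicHaar p) = ∫⁻ y in Bset p n, g y ∂(padicHaar p) := by
  have hpre : (fun y : ℚ_[p] => t - y) ⁻¹' (Bset p n) = Bset p n := by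
    ext y
    simp only [Set.mem_preimage, Bset, Set.mem_setOf_eq]
    constructor
    · intro h
      have hy : y = t - (t - y) := by ring
      rw [hy]
      exact le_trans (nonarch_sub p t (t - y)) (max_le ht h)
    · intro h
      exact le_trans (nonarch_sub p t y) (max_le ht h)
  have mp : MeasurePreserving (fun y : ℚ_[p] => t - y) (padicHaar p) (padicHaar p) :=
    Measure.measurePreserving_sub_left (padicHaar p) t
  have emb : MeasurableEmbedding (fun y : ℚ_[p] => t - y) :=
    (Homeomorph.subLeft t).toMeasurableEquiv.measurableEmbedding
  have h := mp.setLIntegral_comp_preimage_emb emb g (Bset p n)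
  rw [hpre] at h
  exact h

/-- Abbreviation for the geometric-series constant. -/
noncomputable def Ks (s : ℝ) : ℝ := (1 - (p:ℝ) ^ (-(s+1)))⁻¹

lemma Ks_nonneg (s : ℝ) (hs : -1 < s) : 0 ≤ Ks p s := by
  have h1 : (p:ℝ) ^ (-(s+1)) < 1 :=
    Real.rpow_lt_one_of_one_lt_of_neg (hp1 p) (by linarith)
  rw [Ks]
  exact inv_nonneg.mpr (by linarith)

lemma conv1 (n : ℤ) (s : ℝ) : ((p:ℝ)^n)^s = (p:ℝ)^((n:ℝ)*s) := by
  rw [← Real.rpow_intCast (p:ℝ) n, ← Real.rpow_mul (le_of_lt (hp0 p))]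

lemma term_bound (s : ℝ) (hs : -1 < s) (n : ℤ) (c : ℝ) (hc : 0 ≤ c) :
    ∫⁻ y in Bset p n, ENNReal.ofReal (c * ‖y‖ ^ s) ∂(padicHaar p)
      ≤ ENNReal.ofReal (c * (Ks p s * (p:ℝ) ^ ((n:ℝ) * (s+1)))) := by
  simp_rw [ENNReal.ofReal_mul hc]
  rw [lintegral_const_mul' _ _ ENNReal.ofReal_ne_top]
  refine mul_le_mul_right (le_trans (Jb p s hs n) (le_of_eq ?_)) _
  rw [Ks, mul_comm]

lemma term_bound_sub (s : ℝ) (hs : -1 < s) (n : ℤ) (t : ℚ_[p]) (ht : ‖t‖ ≤ (p:ℝ)^n)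
    (c : ℝ) (hc : 0 ≤ c) :
    ∫⁻ y in Bset p n, ENNReal.ofReal (c * ‖t - y‖ ^ s) ∂(padicHaar p)
      ≤ ENNReal.ofReal (c * (Ks p s * (p:ℝ) ^ ((n:ℝ) * (s+1)))) := by
  have h := lint_sub_eq p n t ht (fun z => ENNReal.ofReal (c * ‖z‖ ^ s))
  calc ∫⁻ y in Bset p n, ENNReal.ofReal (c * ‖t - y‖ ^ s) ∂(padicHaar p)
      = ∫⁻ y in Bset p n, ENNReal.ofReal (c * ‖y‖ ^ s) ∂(padicHaar p) := h
    _ ≤ _ := term_bound p s hs n c hc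

/-- Pointwise cross bound on the ball. -/
lemma cross_pointwise (γ s : ℝ) (hγ0 : 0 < γ) (n : ℤ) (t : ℚ_[p]) (ht : ‖t‖ = (p:ℝ)^n)
    (y : ℚ_[p]) (hy : y ∈ Bset p n) :
    ‖t - y‖ ^ s * ‖y‖ ^ (-γ)
      ≤ (p:ℝ)^((n:ℝ)*s) * ‖y‖ ^ (-γ) + (p:ℝ)^(-(n:ℝ)*γ) * ‖t - y‖ ^ s := by
  have hball : ‖y‖ ≤ (p:ℝ)^n := hy
  have h1 : (0:ℝ) ≤ ‖t - y‖ ^ s := Real.rpow_nonneg (norm_nonneg _) _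
  have h2 : (0:ℝ) ≤ ‖y‖ ^ (-γ) := Real.rpow_nonneg (norm_nonneg _) _
  rcases eq_or_lt_of_le hball with heq | hlt
  · -- ‖y‖ = pⁿ
    have : ‖y‖ ^ (-γ) = (p:ℝ)^(-(n:ℝ)*γ) := by
      rw [heq, conv1]; ring_nf
    rw [this]
    have : (0:ℝ) ≤ (p:ℝ)^((n:ℝ)*s) * (p:ℝ)^(-(n:ℝ)*γ) :=
      mul_nonneg (Real.rpow_nonneg (le_of_lt (hp0 p)) _) (Real.rpow_nonneg (le_of_lt (hp0 p)) _)
    linarith [mul_comm ((p:ℝ)^(-(n:ℝ)*γ)) (‖t - y‖ ^ s)]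
  · -- ‖y‖ < pⁿ
    rcases eq_or_ne y 0 with rfl | hy0
    · rw [norm_zero, Real.zero_rpow (by linarith : -γ ≠ 0)]
      have : (0:ℝ) ≤ (p:ℝ)^(-(n:ℝ)*γ) * ‖t - 0‖ ^ s :=
        mul_nonneg (Real.rpow_nonneg (le_of_lt (hp0 p)) _) (Real.rpow_nonneg (norm_nonneg _) _)
      simpa using this
    · have htn : ‖t - y‖ = (p:ℝ)^n := by
        have hne : ‖t‖ ≠ ‖(-y)‖ := by
          rw [norm_neg, ht]; exact ne_of_gt hlt
        have := Padic.add_eq_max_of_ne hne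
        rw [← sub_eq_add_neg] at this
        rw [this, norm_neg, ht]
        exact max_eq_left (le_of_lt hlt)
      rw [htn, conv1]
      have : (0:ℝ) ≤ (p:ℝ)^(-(n:ℝ)*γ) * ((p:ℝ)^n) ^ s :=
        mul_nonneg (Real.rpow_nonneg (le_of_lt (hp0 p)) _) (Real.rpow_nonneg (zpow_nonneg (le_of_lt (hp0 p)) _) _)
      rw [conv1] at this
      linarith

lemma measurable_real_rpow_const (s : ℝ) : Measurable fun x : ℝ => x ^ s := by
  apply measurable_of_continuousOn_compl_singleton (0:ℝ)
  intro x hx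
  exact (Real.continuousAt_rpow_const x s (Or.inl hx)).continuousWithinAt

lemma meas_ofReal_rpow (c s : ℝ) (a : ℚ_[p]) :
    Measurable fun y : ℚ_[p] => ENNReal.ofReal (c * ‖a - y‖ ^ s) := by
  apply Measurable.ennreal_ofReal
  exact ((measurable_real_rpow_const s).comp
    (measurable_norm.comp ((measurable_const.sub measurable_id)))).const_mul c

lemma meas_ofReal_rpow' (c s : ℝ) :
    Measurable fun y : ℚ_[p] => ENNReal.ofReal (c * ‖y‖ ^ s) := by
  apply Measurable.ennreal_ofReal
  exact ((measurable_real_rpow_const s).comp measurable_norm).const_mul c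

/-- Integral cross bound. -/
lemma cross_bound (γ s : ℝ) (hγ0 : 0 < γ) (hγ1 : γ < 1) (hs : -1 < s) (n : ℤ)
    (t : ℚ_[p]) (ht : ‖t‖ = (p:ℝ)^n) :
    ∫⁻ y in Bset p n, ENNReal.ofReal (‖t - y‖ ^ s * ‖y‖ ^ (-γ)) ∂(padicHaar p)
      ≤ ENNReal.ofReal ((Ks p (-γ) + Ks p s) * (p:ℝ) ^ ((n:ℝ) * (s+1-γ))) := by
  have hp0' := hp0 p
  calc ∫⁻ y in Bset p n, ENNReal.ofReal (‖t - y‖ ^ s * ‖y‖ ^ (-γ)) ∂(padicHaar p)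
      ≤ ∫⁻ y in Bset p n,
          (ENNReal.ofReal ((p:ℝ)^((n:ℝ)*s) * ‖y‖ ^ (-γ))
            + ENNReal.ofReal ((p:ℝ)^(-(n:ℝ)*γ) * ‖t - y‖ ^ s)) ∂(padicHaar p) := by
        apply setLIntegral_mono' (Bset_meas p n)
        intro y hy
        refine le_trans (ENNReal.ofReal_le_ofReal (cross_pointwise p γ s hγ0 n t ht y hy)) ?_
        exact ENNReal.ofReal_add_le
    _ = (∫⁻ y in Bset p n, ENNReal.ofReal ((p:ℝ)^((n:ℝ)*s) * ‖y‖ ^ (-γ)) ∂(padicHaar p))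
        + ∫⁻ y in Bset p n, ENNReal.ofReal ((p:ℝ)^(-(n:ℝ)*γ) * ‖t - y‖ ^ s) ∂(padicHaar p) :=
        lintegral_add_left (meas_ofReal_rpow' p _ _) _
    _ ≤ ENNReal.ofReal ((p:ℝ)^((n:ℝ)*s) * (Ks p (-γ) * (p:ℝ) ^ ((n:ℝ) * (-γ+1))))
        + ENNReal.ofReal ((p:ℝ)^(-(n:ℝ)*γ) * (Ks p s * (p:ℝ) ^ ((n:ℝ) * (s+1)))) := by
        gcongr
        · exact term_bound p (-γ) (by linarith) n _ (Real.rpow_nonneg (le_of_lt hp0') _)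
        · exact term_bound_sub p s hs n t (le_of_eq ht) _ (Real.rpow_nonneg (le_of_lt hp0') _)
    _ = ENNReal.ofReal ((Ks p (-γ) + Ks p s) * (p:ℝ) ^ ((n:ℝ) * (s+1-γ))) := by
        rw [← ENNReal.ofReal_add
          (mul_nonneg (Real.rpow_nonneg (le_of_lt hp0') _)
            (mul_nonneg (Ks_nonneg p _ (by linarith)) (Real.rpow_nonneg (le_of_lt hp0') _)))
          (mul_nonneg (Real.rpow_nonneg (le_of_lt hp0') _)
            (mul_nonneg (Ks_nonneg p _ hs) (Real.rpow_nonneg (le_of_lt hp0') _)))]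
        congr 1
        rw [add_mul]
        congr 1
        · rw [mul_comm ((p:ℝ)^((n:ℝ)*s)) _, mul_assoc, ← Real.rpow_add hp0']
          congr 2
          ring
        · rw [mul_comm ((p:ℝ)^(-(n:ℝ)*γ)) _, mul_assoc, ← Real.rpow_add hp0']
          congr 2
          ring

end AuxTranslate
section AuxKey

variable (p : ℕ) [Fact p.Prime]

lemma rpadd (x : ℝ) (hx : 0 ≤ x) (a b : ℝ) (hb : b ≠ 0) : x^a * x^b ≤ x^(a+b) := by
  rcases eq_or_lt_of_le hx with h | h
  · rw [← h, Real.zero_rpow hb, mul_zero]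
    exact Real.rpow_nonneg (le_refl 0) _
  · rw [← Real.rpow_add h]

lemma abs_log_le (ε : ℝ) (hε : 0 < ε) (r : ℝ) (hr : 0 ≤ r) :
    |Real.log r| ≤ (r^ε + r^(-ε))/ε := by
  rcases eq_or_lt_of_le hr with h | h
  · rw [← h]
    simp [Real.log_zero, Real.zero_rpow (ne_of_gt hε), Real.zero_rpow (ne_of_lt (neg_neg_iff_pos.mpr hε))]
  · have h1 : Real.log r ≤ r^ε/ε := Real.log_le_rpow_div hr hε
    have h2 : Real.log r⁻¹ ≤ (r⁻¹)^ε/ε := Real.log_le_rpow_div (by positivity) hε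
    have h3 : (r⁻¹)^ε = r^(-ε) := by
      rw [Real.inv_rpow hr, ← Real.rpow_neg hr]
    rw [Real.log_inv, h3] at h2
    have h4 : (0:ℝ) ≤ r^ε := Real.rpow_nonneg hr _
    have h5 : (0:ℝ) ≤ r^(-ε) := Real.rpow_nonneg hr _
    rw [abs_le]
    constructor
    · rw [div_eq_mul_inv] at h2 ⊢
      nlinarith [inv_pos.mpr hε]
    · rw [div_eq_mul_inv] at h1 ⊢
      nlinarith [inv_pos.mpr hε]

set_option maxHeartbeats 1000000 in
lemma key_est (α γ : ℝ) (hα : 0 < α) (hγ0 : 0 < γ) (hγ1 : γ < 1) (hγα : γ < α) :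
    ∃ σa σb C : ℝ, σa < α ∧ σb < α ∧ 0 ≤ C ∧
      ∀ (n : ℤ) (t : ℚ_[p]), ‖t‖ = (p:ℝ)^n →
        ∫⁻ y in Bset p n, ENNReal.ofReal (|Iker p α t y| * ‖y‖ ^ (-γ)) ∂(padicHaar p)
          ≤ ENNReal.ofReal (C * ((p:ℝ)^((n:ℝ)*σa) + (p:ℝ)^((n:ℝ)*σb))) := by
  have hp0' := hp0 p
  by_cases hα1 : α = 1
  · -- logarithmic case
    subst hα1
    obtain ⟨ε, hε0, hεγ, hεγ1⟩ : ∃ ε : ℝ, 0 < ε ∧ ε < γ ∧ ε + γ < 1 := by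
      refine ⟨min γ (1-γ) / 2, ?_, ?_, ?_⟩
      · have : 0 < min γ (1-γ) := lt_min hγ0 (by linarith)
        linarith
      · have := min_le_left γ (1-γ)
        have : 0 < min γ (1-γ) := lt_min hγ0 (by linarith)
        have := min_le_left γ (1-γ)
        linarith
      · have := min_le_right γ (1-γ)
        linarith
    have hε1 : ε < 1 := by linarith
    refine ⟨1 + ε - γ, 1 - ε - γ, ε⁻¹ * max (Ks p (-γ) + Ks p ε + Ks p (ε-γ))
      (Ks p (-γ) + Ks p (-ε) + Ks p (-ε-γ)), by linarith, by linarith, ?_, ?_⟩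
    · have hKa : 0 ≤ Ks p (-γ) + Ks p ε + Ks p (ε-γ) := by
        have := Ks_nonneg p (-γ) (by linarith)
        have := Ks_nonneg p ε (by linarith)
        have := Ks_nonneg p (ε-γ) (by linarith)
        linarith
      have : 0 ≤ max (Ks p (-γ) + Ks p ε + Ks p (ε-γ)) (Ks p (-γ) + Ks p (-ε) + Ks p (-ε-γ)) :=
        le_trans hKa (le_max_left _ _)
      positivity
    intro n t ht
    -- pointwise bound
    have hpoint : ∀ y ∈ Bset p n, |Iker p 1 t y| * ‖y‖ ^ (-γ)
        ≤ ε⁻¹ * (‖t-y‖^ε * ‖y‖^(-γ) + ‖t-y‖^(-ε) * ‖y‖^(-γ) + ‖y‖^(ε-γ) + ‖y‖^(-ε-γ)) := by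
      intro y _
      have hIk : Iker p 1 t y = Real.log ‖t - y‖ - Real.log ‖y‖ := by
        rw [Iker, if_pos rfl]
      set a := ‖t - y‖
      set b := ‖y‖
      have ha0 : (0:ℝ) ≤ a := norm_nonneg _
      have hb0 : (0:ℝ) ≤ b := norm_nonneg _
      have hcγ : (0:ℝ) ≤ b^(-γ) := Real.rpow_nonneg hb0 _
      have h1 : |Iker p 1 t y| ≤ (a^ε + a^(-ε))/ε + (b^ε + b^(-ε))/ε := by
        rw [hIk]
        refine le_trans (abs_sub _ _) (add_le_add (abs_log_le ε hε0 a ha0) (abs_log_le ε hε0 b hb0))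
      have h2 : |Iker p 1 t y| * b^(-γ) ≤ ((a^ε + a^(-ε))/ε + (b^ε + b^(-ε))/ε) * b^(-γ) :=
        mul_le_mul_of_nonneg_right h1 hcγ
      refine le_trans h2 ?_
      have h3 : b^ε * b^(-γ) ≤ b^(ε-γ) := by
        have := rpadd b hb0 ε (-γ) (by linarith)
        simpa [sub_eq_add_neg] using this
      have h4 : b^(-ε) * b^(-γ) ≤ b^(-ε-γ) := by
        have := rpadd b hb0 (-ε) (-γ) (by linarith)
        simpa [sub_eq_add_neg] using this
      have haε : (0:ℝ) ≤ a^ε := Real.rpow_nonneg ha0 _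
      have haε' : (0:ℝ) ≤ a^(-ε) := Real.rpow_nonneg ha0 _
      have hεinv : (0:ℝ) < ε⁻¹ := inv_pos.mpr hε0
      have expand : ((a^ε + a^(-ε))/ε + (b^ε + b^(-ε))/ε) * b^(-γ)
          = ε⁻¹ * (a^ε * b^(-γ) + a^(-ε) * b^(-γ) + b^ε * b^(-γ) + b^(-ε) * b^(-γ)) := by
        field_simp
        ring
      rw [expand]
      apply mul_le_mul_of_nonneg_left _ (le_of_lt hεinv)
      linarith
    -- integral bound
    have hmeas1 : Measurable fun y : ℚ_[p] =>
        ENNReal.ofReal (‖t - y‖^ε * ‖y‖^(-γ)) := by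
      apply Measurable.ennreal_ofReal
      exact ((measurable_real_rpow_const ε).comp
        (measurable_norm.comp ((measurable_const.sub measurable_id)))).mul
        ((measurable_real_rpow_const (-γ)).comp measurable_norm)
    have hmeas2 : Measurable fun y : ℚ_[p] =>
        ENNReal.ofReal (‖t - y‖^(-ε) * ‖y‖^(-γ)) := by
      apply Measurable.ennreal_ofReal
      exact ((measurable_real_rpow_const (-ε)).comp
        (measurable_norm.comp ((measurable_const.sub measurable_id)))).mul
        ((measurable_real_rpow_const (-γ)).comp measurable_norm)
    have hmeas3 : Measurable fun y : ℚ_[p] => ENNReal.ofReal (‖y‖^(ε-γ)) := by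
      apply Measurable.ennreal_ofReal
      exact (measurable_real_rpow_const (ε-γ)).comp measurable_norm
    calc ∫⁻ y in Bset p n, ENNReal.ofReal (|Iker p 1 t y| * ‖y‖ ^ (-γ)) ∂(padicHaar p)
        ≤ ∫⁻ y in Bset p n, ENNReal.ofReal ε⁻¹ *
            (ENNReal.ofReal (‖t-y‖^ε * ‖y‖^(-γ)) + ENNReal.ofReal (‖t-y‖^(-ε) * ‖y‖^(-γ))
              + ENNReal.ofReal (‖y‖^(ε-γ)) + ENNReal.ofReal (‖y‖^(-ε-γ))) ∂(padicHaar p) := by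
          apply setLIntegral_mono' (Bset_meas p n)
          intro y hy
          refine le_trans (ENNReal.ofReal_le_ofReal (hpoint y hy)) ?_
          rw [ENNReal.ofReal_mul (le_of_lt (inv_pos.mpr hε0))]
          apply mul_le_mul_right
          refine le_trans ENNReal.ofReal_add_le (add_le_add ?_ le_rfl)
          refine le_trans ENNReal.ofReal_add_le (add_le_add ?_ le_rfl)
          exact ENNReal.ofReal_add_le
      _ = ENNReal.ofReal ε⁻¹ *
            ((∫⁻ y in Bset p n, ENNReal.ofReal (‖t-y‖^ε * ‖y‖^(-γ)) ∂(padicHaar p))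
            + (∫⁻ y in Bset p n, ENNReal.ofReal (‖t-y‖^(-ε) * ‖y‖^(-γ)) ∂(padicHaar p))
            + (∫⁻ y in Bset p n, ENNReal.ofReal (‖y‖^(ε-γ)) ∂(padicHaar p))
            + (∫⁻ y in Bset p n, ENNReal.ofReal (‖y‖^(-ε-γ)) ∂(padicHaar p))) := by
          rw [lintegral_const_mul' _ _ ENNReal.ofReal_ne_top]
          congr 1
          rw [lintegral_add_left ((hmeas1.fun_add hmeas2).fun_add hmeas3),
            lintegral_add_left (hmeas1.fun_add hmeas2), lintegral_add_left hmeas1]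
      _ ≤ ENNReal.ofReal ε⁻¹ *
            (ENNReal.ofReal ((Ks p (-γ) + Ks p ε) * (p:ℝ)^((n:ℝ)*(ε+1-γ)))
            + ENNReal.ofReal ((Ks p (-γ) + Ks p (-ε)) * (p:ℝ)^((n:ℝ)*(-ε+1-γ)))
            + ENNReal.ofReal (1 * (Ks p (ε-γ) * (p:ℝ)^((n:ℝ)*((ε-γ)+1))))
            + ENNReal.ofReal (1 * (Ks p (-ε-γ) * (p:ℝ)^((n:ℝ)*((-ε-γ)+1))))) := by
          apply mul_le_mul_right
          gcongr
          · exact cross_bound p γ ε hγ0 hγ1 (by linarith) n t ht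
          · exact cross_bound p γ (-ε) hγ0 hγ1 (by linarith) n t ht
          · have := term_bound p (ε-γ) (by linarith) n 1 zero_le_one
            simpa using this
          · have := term_bound p (-ε-γ) (by linarith) n 1 zero_le_one
            simpa using this
      _ ≤ ENNReal.ofReal ((ε⁻¹ * max (Ks p (-γ) + Ks p ε + Ks p (ε-γ))
            (Ks p (-γ) + Ks p (-ε) + Ks p (-ε-γ))) *
            ((p:ℝ)^((n:ℝ)*(1+ε-γ)) + (p:ℝ)^((n:ℝ)*(1-ε-γ)))) := by
          have hKm : 0 ≤ ε⁻¹ := le_of_lt (inv_pos.mpr hε0)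
          have e1 : (n:ℝ)*(ε+1-γ) = (n:ℝ)*(1+ε-γ) := by ring
          have e2 : (n:ℝ)*(-ε+1-γ) = (n:ℝ)*(1-ε-γ) := by ring
          have e3 : (n:ℝ)*((ε-γ)+1) = (n:ℝ)*(1+ε-γ) := by ring
          have e4 : (n:ℝ)*((-ε-γ)+1) = (n:ℝ)*(1-ε-γ) := by ring
          rw [e1, e2, e3, e4]
          have pa : (0:ℝ) ≤ (p:ℝ)^((n:ℝ)*(1+ε-γ)) := Real.rpow_nonneg (le_of_lt hp0') _
          have pb : (0:ℝ) ≤ (p:ℝ)^((n:ℝ)*(1-ε-γ)) := Real.rpow_nonneg (le_of_lt hp0') _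
          have k1 := Ks_nonneg p (-γ) (by linarith : (-1:ℝ) < -γ)
          have k2 := Ks_nonneg p ε (by linarith : (-1:ℝ) < ε)
          have k3 := Ks_nonneg p (ε-γ) (by linarith : (-1:ℝ) < ε-γ)
          have k4 := Ks_nonneg p (-ε) (by linarith : (-1:ℝ) < -ε)
          have k5 := Ks_nonneg p (-ε-γ) (by linarith : (-1:ℝ) < -ε-γ)
          rw [← ENNReal.ofReal_add (by positivity) (by positivity),
            ← ENNReal.ofReal_add (by positivity) (by positivity),
            ← ENNReal.ofReal_add (by positivity) (by positivity),
            ← ENNReal.ofReal_mul hKm]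
          apply ENNReal.ofReal_le_ofReal
          have hmax1 : Ks p (-γ) + Ks p ε + Ks p (ε-γ)
              ≤ max (Ks p (-γ) + Ks p ε + Ks p (ε-γ)) (Ks p (-γ) + Ks p (-ε) + Ks p (-ε-γ)) :=
            le_max_left _ _
          have hmax2 : Ks p (-γ) + Ks p (-ε) + Ks p (-ε-γ)
              ≤ max (Ks p (-γ) + Ks p ε + Ks p (ε-γ)) (Ks p (-γ) + Ks p (-ε) + Ks p (-ε-γ)) :=
            le_max_right _ _
          rw [mul_assoc]
          apply mul_le_mul_of_nonneg_left _ hKm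
          nlinarith [mul_le_mul_of_nonneg_right hmax1 pa, mul_le_mul_of_nonneg_right hmax2 pb]
    -- done with α = 1 case: adjust exponent names
  · -- power case
    refine ⟨α - γ, α - γ, Ks p (-γ) + Ks p (α-1) + Ks p (α-1-γ), by linarith, by linarith, ?_, ?_⟩
    · have k1 := Ks_nonneg p (-γ) (by linarith : (-1:ℝ) < -γ)
      have k2 := Ks_nonneg p (α-1) (by linarith : (-1:ℝ) < α-1)
      have k3 := Ks_nonneg p (α-1-γ) (by linarith : (-1:ℝ) < α-1-γ)
      linarith
    intro n t ht
    have hpoint : ∀ y ∈ Bset p n, |Iker p α t y| * ‖y‖ ^ (-γ)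
        ≤ ‖t-y‖^(α-1) * ‖y‖^(-γ) + ‖y‖^(α-1-γ) := by
      intro y _
      have hIk : Iker p α t y = ‖t - y‖ ^ (α-1) - ‖y‖ ^ (α-1) := by
        rw [Iker, if_neg hα1]
      set a := ‖t - y‖
      set b := ‖y‖
      have ha0 : (0:ℝ) ≤ a := norm_nonneg _
      have hb0 : (0:ℝ) ≤ b := norm_nonneg _
      have hcγ : (0:ℝ) ≤ b^(-γ) := Real.rpow_nonneg hb0 _
      have h1 : |Iker p α t y| ≤ a^(α-1) + b^(α-1) := by
        rw [hIk]
        refine le_trans (abs_sub _ _) ?_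
        rw [abs_of_nonneg (Real.rpow_nonneg ha0 _), abs_of_nonneg (Real.rpow_nonneg hb0 _)]
      have h2 : |Iker p α t y| * b^(-γ) ≤ (a^(α-1) + b^(α-1)) * b^(-γ) :=
        mul_le_mul_of_nonneg_right h1 hcγ
      refine le_trans h2 ?_
      rw [add_mul]
      have h3 : b^(α-1) * b^(-γ) ≤ b^(α-1-γ) := by
        have := rpadd b hb0 (α-1) (-γ) (by linarith)
        simpa [sub_eq_add_neg] using this
      linarith
    have hmeas1 : Measurable fun y : ℚ_[p] =>
        ENNReal.ofReal (‖t - y‖^(α-1) * ‖y‖^(-γ)) := by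
      apply Measurable.ennreal_ofReal
      exact ((measurable_real_rpow_const (α-1)).comp
        (measurable_norm.comp ((measurable_const.sub measurable_id)))).mul
        ((measurable_real_rpow_const (-γ)).comp measurable_norm)
    calc ∫⁻ y in Bset p n, ENNReal.ofReal (|Iker p α t y| * ‖y‖ ^ (-γ)) ∂(padicHaar p)
        ≤ ∫⁻ y in Bset p n,
            (ENNReal.ofReal (‖t-y‖^(α-1) * ‖y‖^(-γ)) + ENNReal.ofReal (‖y‖^(α-1-γ))) ∂(padicHaar p) := by
          apply setLIntegral_mono' (Bset_meas p n)
          intro y hy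
          exact le_trans (ENNReal.ofReal_le_ofReal (hpoint y hy)) ENNReal.ofReal_add_le
      _ = (∫⁻ y in Bset p n, ENNReal.ofReal (‖t-y‖^(α-1) * ‖y‖^(-γ)) ∂(padicHaar p))
          + (∫⁻ y in Bset p n, ENNReal.ofReal (‖y‖^(α-1-γ)) ∂(padicHaar p)) :=
          lintegral_add_left hmeas1 _
      _ ≤ ENNReal.ofReal ((Ks p (-γ) + Ks p (α-1)) * (p:ℝ)^((n:ℝ)*((α-1)+1-γ)))
          + ENNReal.ofReal (1 * (Ks p (α-1-γ) * (p:ℝ)^((n:ℝ)*((α-1-γ)+1)))) := by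
          gcongr
          · exact cross_bound p γ (α-1) hγ0 hγ1 (by linarith) n t ht
          · have := term_bound p (α-1-γ) (by linarith) n 1 zero_le_one
            simpa using this
      _ ≤ ENNReal.ofReal ((Ks p (-γ) + Ks p (α-1) + Ks p (α-1-γ)) *
            ((p:ℝ)^((n:ℝ)*(α-γ)) + (p:ℝ)^((n:ℝ)*(α-γ)))) := by
          have e1 : (n:ℝ)*((α-1)+1-γ) = (n:ℝ)*(α-γ) := by ring
          have e2 : (n:ℝ)*((α-1-γ)+1) = (n:ℝ)*(α-γ) := by ring
          rw [e1, e2]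
          have k1 := Ks_nonneg p (-γ) (by linarith : (-1:ℝ) < -γ)
          have k2 := Ks_nonneg p (α-1) (by linarith : (-1:ℝ) < α-1)
          have k3 := Ks_nonneg p (α-1-γ) (by linarith : (-1:ℝ) < α-1-γ)
          have pa : (0:ℝ) ≤ (p:ℝ)^((n:ℝ)*(α-γ)) := Real.rpow_nonneg (le_of_lt hp0') _
          rw [← ENNReal.ofReal_add (by positivity) (by positivity)]
          apply ENNReal.ofReal_le_ofReal
          nlinarith

end AuxKey
section AuxFinal

variable (p : ℕ) [Fact p.Prime]

lemma norm_sph (k : ℤ) : ‖sph p k‖ = (p:ℝ)^k := by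
  rw [sph, Padic.norm_p_zpow, neg_neg]

lemma sph_ne_zero (k : ℤ) : sph p k ≠ 0 := by
  intro h
  have := norm_sph p k
  rw [h, norm_zero] at this
  have := zpow_pos (hp0 p) k
  linarith

lemma summable_aux (c : ℝ) (hc : c < 0) (m : ℤ) :
    Summable (fun j : ℕ => (p:ℝ) ^ (c * ((m:ℝ) + (j:ℝ)))) := by
  have hp0' := hp0 p
  have h : ∀ j : ℕ, (p:ℝ)^(c*((m:ℝ)+(j:ℝ))) = (p:ℝ)^(c*(m:ℝ)) * ((p:ℝ)^c)^j := by
    intro j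
    rw [mul_add, Real.rpow_add hp0', Real.rpow_mul (le_of_lt hp0') c (j:ℝ),
      Real.rpow_natCast]
  apply Summable.congr _ (fun j => (h j).symm)
  apply Summable.mul_left
  exact summable_geometric_of_lt_one (Real.rpow_nonneg (le_of_lt hp0') c)
    (Real.rpow_lt_one_of_one_lt_of_neg (hp1 p) hc)

end AuxFinal

/-- a global mild solution satisfies the summability conditions under which
the Vladimirov derivative of a radial function is defined. -/
theorem mild_solution_summability (p : ℕ) [Fact p.Prime] (α γ : ℝ)
    (hα : 0 < α) (hγ0 : 0 < γ) (hγ : γ < min 1 α) (u₀ M A β : ℝ) (f : ℤ → ℝ → ℝ)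
    (hβ : α < β + γ)
    (hM : ∀ (ℓ : ℤ) (x : ℝ), |f ℓ x| ≤ M)
    (hA : ∀ ℓ : ℤ, 1 ≤ ℓ → ∀ x : ℝ, |f ℓ x| ≤ A * (p : ℝ) ^ (-β * (ℓ : ℝ)))
    (u : ℚ_[p] → ℝ) (hu : Radial p u)
    (N : ℤ) (B : ℝ) (hB : ∀ t : ℚ_[p], ‖t‖ ≤ (p : ℝ) ^ N → |u t| ≤ B)
    (heq : ∀ t : ℚ_[p], t ≠ 0 →
      IntegrableOn (fun y => Iker p α t y * (‖y‖ ^ (-γ) * f (-y.valuation) (u y)))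
        {y : ℚ_[p] | ‖y‖ ≤ ‖t‖} (padicHaar p) ∧
      u t = u₀ + Iop p α (fun y => ‖y‖ ^ (-γ) * f (-y.valuation) (u y)) t) :
    ∀ m : ℤ,
      (Summable fun j : ℕ => (p : ℝ) ^ (m - j : ℤ) * |u (sph p (m - j))|) ∧
      Summable fun j : ℕ => (p : ℝ) ^ (-α * ((m + j : ℤ) : ℝ)) * |u (sph p (m + j))| := by
  have hp0' := hp0 p
  have hp1' := hp1 p
  have hγ1 : γ < 1 := lt_of_lt_of_le hγ (min_le_left _ _)
  have hγα : γ < α := lt_of_lt_of_le hγ (min_le_right _ _)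
  have hB0 : 0 ≤ B := le_trans (abs_nonneg _) (hB 0 (by
    rw [norm_zero]; exact le_of_lt (zpow_pos hp0' N)))
  have hM0 : 0 ≤ M := le_trans (abs_nonneg _) (hM 0 0)
  intro m
  constructor
  · -- first summability: near zero
    set k0 : ℕ := (m - N).toNat with hk0
    have hk0' : m - N ≤ (k0 : ℤ) := Int.self_le_toNat _
    rw [← summable_nat_add_iff k0]
    refine Summable.of_nonneg_of_le
      (fun j => mul_nonneg (le_of_lt (zpow_pos hp0' _)) (abs_nonneg _))
      (fun j => ?_)
      ((summable_geometric_of_lt_one (by positivity)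
        (inv_lt_one_of_one_lt₀ hp1')).mul_left (B * (p:ℝ)^(m - k0 : ℤ)))
    · 
      have hle : m - ((j:ℤ) + (k0:ℤ)) ≤ N := by omega
      have hnorm : ‖sph p (m - ((j:ℕ) + k0 : ℕ))‖ ≤ (p:ℝ)^N := by
        rw [norm_sph]
        push_cast
        exact zpow_le_zpow_right₀ (le_of_lt hp1') (by push_cast; omega)
      have hub : |u (sph p (m - ((j:ℕ) + k0 : ℕ)))| ≤ B := hB _ hnorm
      have hsplit : (p:ℝ)^(m - ((j:ℕ) + k0 : ℕ) : ℤ)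
          = (p:ℝ)^(m - k0 : ℤ) * ((p:ℝ)⁻¹)^j := by
        rw [show (m - ((j:ℕ) + k0 : ℕ) : ℤ) = (m - k0) + (-(j:ℤ)) by push_cast; ring,
          zpow_add₀ (ne_of_gt hp0'), zpow_neg, zpow_natCast, inv_pow]
      calc (p:ℝ)^(m - ((j:ℕ) + k0 : ℕ) : ℤ) * |u (sph p (m - ((j:ℕ) + k0 : ℕ)))|
          ≤ (p:ℝ)^(m - ((j:ℕ) + k0 : ℕ) : ℤ) * B :=
            mul_le_mul_of_nonneg_left hub (le_of_lt (zpow_pos hp0' _))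
        _ = (B * (p:ℝ)^(m - k0 : ℤ)) * ((p:ℝ)⁻¹)^j := by rw [hsplit]; ring
  · -- second summability: growth estimate
    obtain ⟨σa, σb, C, hσa, hσb, hC0, hkey⟩ := key_est p α γ hα hγ0 hγ1 hγα
    set Q : ℝ := |Icoef p α| * (M * C) with hQ
    have hQ0 : 0 ≤ Q := by positivity
    have growth : ∀ (n : ℤ) (t : ℚ_[p]), t ≠ 0 → ‖t‖ = (p:ℝ)^n →
        |u t| ≤ |u₀| + Q * ((p:ℝ)^((n:ℝ)*σa) + (p:ℝ)^((n:ℝ)*σb)) := by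
      intro n t ht0 htn
      obtain ⟨hint, hut⟩ := heq t ht0
      set F : ℚ_[p] → ℝ := fun y => Iker p α t y * (‖y‖ ^ (-γ) * f (-y.valuation) (u y)) with hF
      have hset : {y : ℚ_[p] | ‖y‖ ≤ ‖t‖} = Bset p n := by
        ext y; simp only [Set.mem_setOf_eq, Bset, htn]
      rw [hset] at hint
      -- bound the integral
      have hptw : ∀ y : ℚ_[p], |F y| ≤ M * (|Iker p α t y| * ‖y‖ ^ (-γ)) := by
        intro y
        rw [hF]
        have h1 : |Iker p α t y * (‖y‖ ^ (-γ) * f (-y.valuation) (u y))|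
            = |Iker p α t y| * (‖y‖ ^ (-γ) * |f (-y.valuation) (u y)|) := by
          rw [abs_mul, abs_mul, abs_of_nonneg (Real.rpow_nonneg (norm_nonneg _) _)]
        rw [h1]
        have h2 : ‖y‖ ^ (-γ) * |f (-y.valuation) (u y)| ≤ ‖y‖ ^ (-γ) * M :=
          mul_le_mul_of_nonneg_left (hM _ _) (Real.rpow_nonneg (norm_nonneg _) _)
        calc |Iker p α t y| * (‖y‖ ^ (-γ) * |f (-y.valuation) (u y)|)
            ≤ |Iker p α t y| * (‖y‖ ^ (-γ) * M) :=
              mul_le_mul_of_nonneg_left h2 (abs_nonneg _)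
          _ = M * (|Iker p α t y| * ‖y‖ ^ (-γ)) := by ring
      have hlint : ∫⁻ y in Bset p n, (‖F y‖₊ : ℝ≥0∞) ∂(padicHaar p)
          ≤ ENNReal.ofReal (M * (C * ((p:ℝ)^((n:ℝ)*σa) + (p:ℝ)^((n:ℝ)*σb)))) := by
        have hmono : ∀ y : ℚ_[p], (‖F y‖₊ : ℝ≥0∞)
            ≤ ENNReal.ofReal M * ENNReal.ofReal (|Iker p α t y| * ‖y‖ ^ (-γ)) := by
          intro y
          rw [← ENNReal.ofReal_mul hM0, ← ENNReal.ofReal_coe_nnreal, coe_nnnorm, Real.norm_eq_abs]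
          exact ENNReal.ofReal_le_ofReal (hptw y)
        calc ∫⁻ y in Bset p n, (‖F y‖₊ : ℝ≥0∞) ∂(padicHaar p)
            ≤ ∫⁻ y in Bset p n, ENNReal.ofReal M *
                ENNReal.ofReal (|Iker p α t y| * ‖y‖ ^ (-γ)) ∂(padicHaar p) :=
              setLIntegral_mono' (Bset_meas p n) (fun y _ => hmono y)
          _ = ENNReal.ofReal M *
              ∫⁻ y in Bset p n, ENNReal.ofReal (|Iker p α t y| * ‖y‖ ^ (-γ)) ∂(padicHaar p) :=
              lintegral_const_mul' _ _ ENNReal.ofReal_ne_top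
          _ ≤ ENNReal.ofReal M *
              ENNReal.ofReal (C * ((p:ℝ)^((n:ℝ)*σa) + (p:ℝ)^((n:ℝ)*σb))) :=
              mul_le_mul_right (hkey n t htn) _
          _ = ENNReal.ofReal (M * (C * ((p:ℝ)^((n:ℝ)*σa) + (p:ℝ)^((n:ℝ)*σb)))) := by
              rw [← ENNReal.ofReal_mul hM0]
      have hintnorm : ∫ y in Bset p n, ‖F y‖ ∂(padicHaar p)
          ≤ M * (C * ((p:ℝ)^((n:ℝ)*σa) + (p:ℝ)^((n:ℝ)*σb))) := by
        have h1 : ENNReal.ofReal (∫ y in Bset p n, ‖F y‖ ∂(padicHaar p))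
            = ∫⁻ y in Bset p n, (‖F y‖₊ : ℝ≥0∞) ∂(padicHaar p) :=
          ofReal_integral_norm_eq_lintegral_enorm hint
        have h2 : ENNReal.ofReal (∫ y in Bset p n, ‖F y‖ ∂(padicHaar p))
            ≤ ENNReal.ofReal (M * (C * ((p:ℝ)^((n:ℝ)*σa) + (p:ℝ)^((n:ℝ)*σb)))) := by
          rw [h1]; exact hlint
        have hrhs : 0 ≤ M * (C * ((p:ℝ)^((n:ℝ)*σa) + (p:ℝ)^((n:ℝ)*σb))) := by positivity
        exact (ENNReal.ofReal_le_ofReal_iff hrhs).mp h2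
      have habs : |∫ y in Bset p n, F y ∂(padicHaar p)|
          ≤ M * (C * ((p:ℝ)^((n:ℝ)*σa) + (p:ℝ)^((n:ℝ)*σb))) := by
        refine le_trans ?_ hintnorm
        have := norm_integral_le_integral_norm (μ := (padicHaar p).restrict (Bset p n)) F
        simpa [Real.norm_eq_abs] using this
      -- conclude
      rw [hut, Iop]
      have hIset : ∫ y in {y : ℚ_[p] | ‖y‖ ≤ ‖t‖}, F y ∂(padicHaar p)
          = ∫ y in Bset p n, F y ∂(padicHaar p) := by rw [hset]
      calc |u₀ + Icoef p α * ∫ y in {y : ℚ_[p] | ‖y‖ ≤ ‖t‖}, Iker p α t y *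
            (‖y‖ ^ (-γ) * f (-y.valuation) (u y)) ∂(padicHaar p)|
          ≤ |u₀| + |Icoef p α * ∫ y in Bset p n, F y ∂(padicHaar p)| := by
            rw [← hF, hIset]
            exact abs_add_le _ _
        _ ≤ |u₀| + |Icoef p α| * (M * (C * ((p:ℝ)^((n:ℝ)*σa) + (p:ℝ)^((n:ℝ)*σb)))) := by
            rw [abs_mul]
            exact add_le_add le_rfl (mul_le_mul_of_nonneg_left habs (abs_nonneg _))
        _ = |u₀| + Q * ((p:ℝ)^((n:ℝ)*σa) + (p:ℝ)^((n:ℝ)*σb)) := by rw [hQ]; ring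
    -- assemble summability
    have hterm : ∀ j : ℕ, (p : ℝ) ^ (-α * ((m + j : ℤ) : ℝ)) * |u (sph p (m + j))|
        ≤ |u₀| * (p:ℝ)^((-α) * ((m:ℝ) + j)) + Q * (p:ℝ)^((σa - α) * ((m:ℝ) + j))
          + Q * (p:ℝ)^((σb - α) * ((m:ℝ) + j)) := by
      intro j
      have hg := growth (m + j) (sph p (m + j)) (sph_ne_zero p _) (norm_sph p _)
      have hcast : ((m + (j:ℤ) : ℤ) : ℝ) = (m:ℝ) + (j:ℝ) := by push_cast; ring
      have hpnn : (0:ℝ) ≤ (p:ℝ) ^ (-α * ((m + j : ℤ) : ℝ)) :=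
        Real.rpow_nonneg (le_of_lt hp0') _
      calc (p : ℝ) ^ (-α * ((m + j : ℤ) : ℝ)) * |u (sph p (m + j))|
          ≤ (p : ℝ) ^ (-α * ((m + j : ℤ) : ℝ)) *
              (|u₀| + Q * ((p:ℝ)^(((m + j : ℤ):ℝ)*σa) + (p:ℝ)^(((m + j : ℤ):ℝ)*σb))) :=
            mul_le_mul_of_nonneg_left hg hpnn
        _ = |u₀| * (p:ℝ)^((-α) * ((m:ℝ) + j)) + Q * (p:ℝ)^((σa - α) * ((m:ℝ) + j))
            + Q * (p:ℝ)^((σb - α) * ((m:ℝ) + j)) := by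
            rw [hcast]
            have e1 : (p:ℝ)^(-α*((m:ℝ)+j)) * (p:ℝ)^(((m:ℝ)+j)*σa)
                = (p:ℝ)^((σa - α)*((m:ℝ)+j)) := by
              rw [← Real.rpow_add hp0']; congr 1; ring
            have e2 : (p:ℝ)^(-α*((m:ℝ)+j)) * (p:ℝ)^(((m:ℝ)+j)*σb)
                = (p:ℝ)^((σb - α)*((m:ℝ)+j)) := by
              rw [← Real.rpow_add hp0']; congr 1; ring
            have expand : (p:ℝ)^(-α*((m:ℝ)+j)) *
                (|u₀| + Q * ((p:ℝ)^(((m:ℝ)+j)*σa) + (p:ℝ)^(((m:ℝ)+j)*σb)))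
                = |u₀| * (p:ℝ)^(-α*((m:ℝ)+j))
                  + Q * ((p:ℝ)^(-α*((m:ℝ)+j)) * (p:ℝ)^(((m:ℝ)+j)*σa))
                  + Q * ((p:ℝ)^(-α*((m:ℝ)+j)) * (p:ℝ)^(((m:ℝ)+j)*σb)) := by ring
            rw [expand, e1, e2]
    apply Summable.of_nonneg_of_le
      (fun j => mul_nonneg (Real.rpow_nonneg (le_of_lt hp0') _) (abs_nonneg _)) hterm
    apply Summable.add
    apply Summable.add
    · exact (summable_aux p (-α) (by linarith) m).mul_left _
    · exact (summable_aux p (σa - α) (by linarith) m).mul_left _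
    · exact (summable_aux p (σb - α) (by linarith) m).mul_left _
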